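/- Fix integers w ≥ 1 and N with 0 < 32w < N, and a real M ≥ 1. Let R₁ = [4w, N] × [0, w/2] and R₂ = [0, w/2] × [4w, N], and L = R₁ ∪ R₂. Suppose p(x,y) is a real bivariate polynomial of total degree d such that p(4w, 4w) ≥ 1.5·M and 0 ≤ p(x,y) ≤ 1 for all (x,y) ∈ L. Then d = Ω(√(N/w) · log M); concretely, there is a universal constant α > 0 such that d ≥ α·√(N/w)·log(1.5M). -/

import Mathlib

/-!
Both `(4wt, 4w/t)` and `(4w/t, 4wt)` lie in the L for `8 ≤ t ≤ N/(4w)`, so the symmetric Laurent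
polynomial `p(4wt, 4w/t) + p(4w/t, 4wt)` is bounded by `2` there. It is a polynomial `g` of degree
`≤ d` in `s = t + 1/t`, bounded on `[8 + 1/8, N/(4w) + 4w/N]`, while `g(2) = 2 p(4w, 4w) ≥ 3M`.
Paturi's lemma (a polynomial of degree `d` bounded by `1` on an interval of length `ℓ` is at most
`exp(2d √(δ/ℓ))` at distance `δ` from it, by the extremality of Chebyshev polynomials and
`T_d(cosh θ) = cosh(dθ)`) gives `log(1.5M) ≤ 14 d √(w/N)` once `N ≥ 100w`. For smaller `N` the
same lemma, applied on the antidiagonal through the corner, gives `log(1.5M) ≤ 6d`.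
-/

open Real Set

namespace Real

theorem one_add_sq_div_two_le_cosh (x : ℝ) : 1 + x ^ 2 / 2 ≤ cosh x := by
  have hsinh : (x / 2) ^ 2 ≤ sinh (x / 2) ^ 2 :=
    sq_le_sq.2 (by rw [abs_sinh]; exact self_le_sinh_iff.2 (abs_nonneg _))
  have hcosh := cosh_two_mul (x / 2)
  rw [show 2 * (x / 2) = x by ring, cosh_sq] at hcosh
  linarith

theorem cosh_le_exp {x : ℝ} (hx : 0 ≤ x) : cosh x ≤ exp x := by
  rw [cosh_eq]; linarith [exp_le_exp.2 (show -x ≤ x by linarith)]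

theorem arcosh_le_sqrt {x : ℝ} (hx : 1 ≤ x) : arcosh x ≤ √(2 * (x - 1)) := by
  refine (le_sqrt (arcosh_nonneg hx) (by linarith)).2 ?_
  linarith [one_add_sq_div_two_le_cosh (arcosh x), cosh_arcosh hx]

end Real

namespace Polynomial.Chebyshev

theorem eval_T_real_le_exp (n : ℕ) {x : ℝ} (hx : 1 ≤ x) :
    (T ℝ n).eval x ≤ exp (n * √(2 * (x - 1))) := by
  calc (T ℝ n).eval x = cosh (n * arcosh x) := by
        conv_lhs => rw [← cosh_arcosh hx, T_real_cosh]
        norm_cast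
    _ ≤ exp (n * arcosh x) := cosh_le_exp (mul_nonneg n.cast_nonneg (arcosh_nonneg hx))
    _ ≤ exp (n * √(2 * (x - 1))) := by gcongr; exact arcosh_le_sqrt hx

theorem natDegree_C_le {R : Type*} [CommRing R] (n : ℤ) : (C R n).natDegree ≤ n.natAbs := by
  rw [← C_natAbs]
  induction n.natAbs using Nat.twoStepInduction with
  | zero => simp
  | one => simpa using natDegree_X_le
  | more k ih₁ ih₂ =>
    push_cast at ih₂ ⊢
    rw [C_add_two]
    refine (natDegree_sub_le _ _).trans (max_le ((natDegree_mul_le).trans ?_) (by omega))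
    have := natDegree_X_le (R := R); omega

theorem C_eval_add_inv {K : Type*} [Field K] {t : K} (ht : t ≠ 0) (n : ℤ) :
    (C K n).eval (t + t⁻¹) = t ^ n + t ^ (-n) := by
  obtain ⟨k, rfl | rfl⟩ := n.eq_nat_or_neg
  · rw [← dickson_one_one_eq_chebyshev_C, dickson_one_one_eval_add_inv _ _ (mul_inv_cancel₀ ht)]
    simp
  · rw [C_neg, ← dickson_one_one_eq_chebyshev_C,
      dickson_one_one_eval_add_inv _ _ (mul_inv_cancel₀ ht)]
    simp [add_comm]

end Polynomial.Chebyshev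

namespace Polynomial

theorem eval_le_exp_of_abs_le_one_on_Icc {q : ℝ[X]} {d : ℕ} (hq : q.natDegree ≤ d)
    {a b z : ℝ} (hab : a < b) (hz : z ≤ a) (hbound : ∀ x ∈ Icc a b, |q.eval x| ≤ 1) :
    q.eval z ≤ exp (2 * d * √((a - z) / (b - a))) := by
  have hba : 0 < b - a := sub_pos.2 hab
  set Q := q.comp (C ((a + b) / 2) - C ((b - a) / 2) * X)
  have hQ (y : ℝ) : Q.eval y = q.eval ((a + b) / 2 - (b - a) / 2 * y) := by simp [Q]
  have hQdeg : Q.degree ≤ d := by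
    refine degree_le_of_natDegree_le (natDegree_comp_le.trans ?_)
    have : (C ((a + b) / 2) - C ((b - a) / 2) * X).natDegree ≤ 1 := by
      compute_degree
    nlinarith
  have hQbound : ∀ y ∈ Icc (-1 : ℝ) 1, |Q.eval y| ≤ 1 := fun y ⟨hy₁, hy₂⟩ ↦ by
    rw [hQ]; exact hbound _ ⟨by nlinarith, by nlinarith⟩
  set x₀ := 1 + 2 * ((a - z) / (b - a))
  have hx₀ : 1 ≤ x₀ := by have := div_nonneg (sub_nonneg.2 hz) hba.le; linarith
  have hQx₀ : Q.eval x₀ = q.eval z := by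
    rw [hQ]; congr 1; simp only [x₀]; field_simp; ring
  calc q.eval z = Q.eval x₀ := hQx₀.symm
    _ ≤ (Chebyshev.T ℝ d).eval x₀ := by
      simpa using
        Chebyshev.eval_iterate_derivative_le_of_forall_abs_le_one (k := 0) hx₀ hQdeg hQbound
    _ ≤ exp (d * √(2 * (x₀ - 1))) := Chebyshev.eval_T_real_le_exp d hx₀
    _ = exp (2 * d * √((a - z) / (b - a))) := by
      rw [show 2 * (x₀ - 1) = 2 ^ 2 * ((a - z) / (b - a)) by ring, sqrt_mul (by norm_num),
        sqrt_sq (by norm_num)]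
      ring_nf

end Polynomial

namespace MvPolynomial

open Polynomial

theorem natDegree_sum_C_coeff_mul_le_totalDegree {σ R : Type*} [CommSemiring R]
    (p : MvPolynomial σ R) {f : (σ →₀ ℕ) → R[X]} (hf : ∀ m, (f m).natDegree ≤ m.sum fun _ e ↦ e) :
    (∑ m ∈ p.support, Polynomial.C (p.coeff m) * f m).natDegree ≤ p.totalDegree :=
  natDegree_sum_le_of_forall_le _ _ fun m hm ↦
    (natDegree_C_mul_le _ _).trans ((hf m).trans (le_totalDegree hm))

theorem natDegree_aeval_le_totalDegree {σ R : Type*} [CommSemiring R] {f : σ → R[X]}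
    (hf : ∀ i, (f i).natDegree ≤ 1) (p : MvPolynomial σ R) :
    (aeval f p).natDegree ≤ p.totalDegree := by
  rw [aeval_def, eval₂_eq, Polynomial.algebraMap_eq]
  refine natDegree_sum_C_coeff_mul_le_totalDegree p fun m ↦ (natDegree_prod_le _ _).trans ?_
  exact Finset.sum_le_sum fun i _ ↦ natDegree_pow_le.trans (by nlinarith [hf i])

theorem eval_le_exp_of_abs_le_one_on_segment {σ : Type*} (p : MvPolynomial σ ℝ) (x v : σ → ℝ)
    {a b : ℝ} (hab : a < b) (ha : 0 ≤ a) (hbound : ∀ u ∈ Icc a b, |eval (x + u • v) p| ≤ 1) :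
    eval x p ≤ exp (2 * p.totalDegree * √(a / (b - a))) := by
  set q := aeval (fun i ↦ Polynomial.C (x i) + Polynomial.C (v i) * Polynomial.X) p
  have hq (u : ℝ) : q.eval u = eval (x + u • v) p := by
    simp only [q, aeval_def, polynomial_eval_eval₂]
    rw [show (evalRingHom u).comp (algebraMap ℝ ℝ[X]) = RingHom.id ℝ from
      RingHom.ext fun _ ↦ by simp]
    congr 1
    ext i
    simp only [Polynomial.eval_add, Polynomial.eval_C, Polynomial.eval_mul, Polynomial.eval_X,
      Pi.add_apply, Pi.smul_apply, smul_eq_mul]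
    ring
  have hqdeg : q.natDegree ≤ p.totalDegree :=
    natDegree_aeval_le_totalDegree (fun i ↦ by compute_degree) p
  simpa [hq] using Polynomial.eval_le_exp_of_abs_le_one_on_Icc hqdeg hab ha
    fun u hu ↦ hq u ▸ hbound u hu

theorem exists_natDegree_le_eval_add_inv {K : Type*} [Field K] (p : MvPolynomial (Fin 2) K)
    (c : K) : ∃ g : K[X], g.natDegree ≤ p.totalDegree ∧ ∀ t ≠ 0,
      g.eval (t + t⁻¹) = eval ![c * t, c * t⁻¹] p + eval ![c * t⁻¹, c * t] p := by
  -- The monomial `X₀ⁱ X₁ʲ` contributes `cⁱ⁺ʲ (tⁱ⁻ʲ + tʲ⁻ⁱ) = cⁱ⁺ʲ Cᵢ₋ⱼ(t + t⁻¹)`, where `Cₙ` is the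
  -- Vieta–Lucas (normalized Chebyshev) polynomial.
  refine ⟨∑ m ∈ p.support, Polynomial.C (p.coeff m) *
    (Polynomial.C (c ^ (m 0 + m 1)) * Chebyshev.C K (m 0 - m 1)), ?_, fun t ht ↦ ?_⟩
  · refine natDegree_sum_C_coeff_mul_le_totalDegree p fun m ↦
      (natDegree_C_mul_le _ _).trans ((Chebyshev.natDegree_C_le _).trans ?_)
    rw [Finsupp.sum_fintype _ _ fun _ ↦ rfl, Fin.sum_univ_two]
    omega
  · rw [eval_eq', eval_eq', ← Finset.sum_add_distrib, Polynomial.eval_finsetSum]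
    refine Finset.sum_congr rfl fun m _ ↦ ?_
    simp only [Polynomial.eval_mul, Polynomial.eval_C, Chebyshev.C_eval_add_inv ht,
      Fin.prod_univ_two, Matrix.cons_val_zero, Matrix.cons_val_one]
    rw [neg_sub, zpow_sub₀ ht, zpow_sub₀ ht]
    simp only [zpow_natCast, mul_pow, inv_pow]
    field_simp
    ring

theorem eval_le_exp_of_abs_le_one_on_hyperbola (p : MvPolynomial (Fin 2) ℝ) (c : ℝ) {τ T : ℝ}
    (hτ : 1 ≤ τ) (hτT : τ < T)
    (hbound : ∀ t ∈ Icc τ T, |eval ![c * t, c * t⁻¹] p| ≤ 1 ∧ |eval ![c * t⁻¹, c * t] p| ≤ 1) :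
    eval ![c, c] p ≤ exp (2 * p.totalDegree * √((τ + τ⁻¹ - 2) / (T + T⁻¹ - (τ + τ⁻¹)))) := by
  obtain ⟨g, hgdeg, hg⟩ := exists_natDegree_le_eval_add_inv p c
  have hτ₀ : 0 < τ := by linarith
  have hτ_two : 2 ≤ τ + τ⁻¹ := by
    nlinarith [mul_inv_cancel₀ hτ₀.ne', inv_pos.2 hτ₀]
  have hτT' : τ + τ⁻¹ < T + T⁻¹ := by
    have hT₀ : 0 < T := by linarith
    have hdiff : T + T⁻¹ - (τ + τ⁻¹) = (T - τ) * (T * τ - 1) / (T * τ) := by field_simp; ring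
    have : 0 < (T - τ) * (T * τ - 1) / (T * τ) :=
      div_pos (mul_pos (by linarith) (by nlinarith)) (by positivity)
    linarith
  have hsurj : Icc (τ + τ⁻¹) (T + T⁻¹) ⊆ (fun t ↦ t + t⁻¹) '' Icc τ T :=
    intermediate_value_Icc hτT.le <| continuousOn_id.add <| continuousOn_inv₀.mono fun t ht ↦
      (show (0 : ℝ) < t by linarith [ht.1]).ne'
  have hgbound : ∀ s ∈ Icc (τ + τ⁻¹) (T + T⁻¹), |(Polynomial.C 2⁻¹ * g).eval s| ≤ 1 := by
    intro s hs
    obtain ⟨t, ht, rfl⟩ := hsurj hs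
    obtain ⟨h₁, h₂⟩ := hbound t ht
    rw [Polynomial.eval_mul, Polynomial.eval_C, hg t (by linarith [ht.1]), abs_mul,
      abs_of_pos (by norm_num)]
    linarith [abs_add_le (eval ![c * t, c * t⁻¹] p) (eval ![c * t⁻¹, c * t] p)]
  have hg_corner : (Polynomial.C 2⁻¹ * g).eval 2 = eval ![c, c] p := by
    have := hg 1 one_ne_zero
    rw [inv_one, mul_one, one_add_one_eq_two] at this
    rw [Polynomial.eval_mul, Polynomial.eval_C, this]
    ring
  rw [← hg_corner]
  exact Polynomial.eval_le_exp_of_abs_le_one_on_Icc ((natDegree_C_mul_le _ _).trans hgdeg) hτT'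
    hτ_two hgbound

end MvPolynomial

open MvPolynomial

def LShape (w N : ℝ) : Set (ℝ × ℝ) :=
  Icc (4 * w) N ×ˢ Icc 0 (w / 2) ∪ Icc 0 (w / 2) ×ˢ Icc (4 * w) N

theorem eval_corner_le_of_LShape_diagonal (p : MvPolynomial (Fin 2) ℝ) {w N : ℝ} (hw : 0 < w)
    (hN : 8 * w ≤ N) (hL : ∀ x y, (x, y) ∈ LShape w N → |eval ![x, y] p| ≤ 1) :
    eval ![4 * w, 4 * w] p ≤ exp (6 * p.totalDegree) := by
  have hbound :
      ∀ u ∈ Icc (7 * w / 2) (4 * w), |eval (![4 * w, 4 * w] + u • ![1, -1]) p| ≤ 1 := by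
    rintro u ⟨hu₁, hu₂⟩
    have : ![4 * w, 4 * w] + u • ![1, -1] = ![4 * w + u, 4 * w - u] := by
      ext i; fin_cases i <;> simp [sub_eq_add_neg]
    rw [this]
    exact hL _ _ (Or.inl ⟨⟨by linarith, by linarith⟩, by linarith, by linarith⟩)
  refine (eval_le_exp_of_abs_le_one_on_segment p _ _ (by linarith) (by positivity)
    hbound).trans ?_
  have hsqrt : √(7 * w / 2 / (4 * w - 7 * w / 2)) ≤ 3 := by
    rw [show 7 * w / 2 / (4 * w - 7 * w / 2) = 7 by field_simp; ring, sqrt_le_iff]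
    norm_num
  rw [exp_le_exp]
  nlinarith [(p.totalDegree.cast_nonneg : (0 : ℝ) ≤ _)]

theorem eval_corner_le_of_LShape_hyperbola (p : MvPolynomial (Fin 2) ℝ) {w N : ℝ} (hw : 0 < w)
    (hN : 100 * w ≤ N) (hL : ∀ x y, (x, y) ∈ LShape w N → |eval ![x, y] p| ≤ 1) :
    eval ![4 * w, 4 * w] p ≤ exp (14 * p.totalDegree / √(N / w)) := by
  set T := N / (4 * w)
  have hT : 25 ≤ T := by rw [le_div_iff₀ (by positivity)]; linarith
  have hNT : N / w = 4 * T := by simp only [T]; field_simp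
  have hbound : ∀ t ∈ Icc 8 T, |eval ![4 * w * t, 4 * w * t⁻¹] p| ≤ 1 ∧
      |eval ![4 * w * t⁻¹, 4 * w * t] p| ≤ 1 := by
    rintro t ⟨ht₁, ht₂⟩
    have hx : 4 * w ≤ 4 * w * t ∧ 4 * w * t ≤ N := by
      constructor
      · nlinarith
      · have := mul_le_mul_of_nonneg_left ht₂ (by positivity : 0 ≤ 4 * w)
        rwa [mul_div_cancel₀ _ (by positivity)] at this
    have hy : 0 ≤ 4 * w * t⁻¹ ∧ 4 * w * t⁻¹ ≤ w / 2 := by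
      refine ⟨by positivity, ?_⟩
      rw [← div_eq_mul_inv, div_le_iff₀ (by linarith)]
      nlinarith
    exact ⟨hL _ _ (Or.inl ⟨hx, hy⟩), hL _ _ (Or.inr ⟨hy, hx⟩)⟩
  refine (eval_le_exp_of_abs_le_one_on_hyperbola p (4 * w) (by norm_num) (by linarith)
    hbound).trans ?_
  have hratio : (8 + 8⁻¹ - 2) / (T + T⁻¹ - (8 + 8⁻¹)) ≤ 7 ^ 2 / (N / w) := by
    have hTinv : 0 < T⁻¹ := by positivity
    rw [hNT, div_le_div_iff₀ (by linarith) (by positivity)]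
    linarith
  have hsqrt : √((8 + 8⁻¹ - 2) / (T + T⁻¹ - (8 + 8⁻¹))) ≤ 7 / √(N / w) :=
    (sqrt_le_sqrt hratio).trans_eq <| by
      rw [sqrt_div' _ (by rw [hNT]; linarith), sqrt_sq (by norm_num)]
  calc exp (2 * p.totalDegree * √((8 + 8⁻¹ - 2) / (T + T⁻¹ - (8 + 8⁻¹))))
      ≤ exp (2 * p.totalDegree * (7 / √(N / w))) := by gcongr
    _ = exp (14 * p.totalDegree / √(N / w)) := by ring_nf

/-- Degree lower bound for bivariate polynomials bounded on an "L"-shaped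
region: there is a universal constant `α > 0` such that if `0 < 32w < N`,
`M ≥ 1`, and the bivariate polynomial `p` of total degree `d` satisfies
`p(4w,4w) ≥ 1.5 M` and `0 ≤ p ≤ 1` on `([4w,N] × [0,w/2]) ∪ ([0,w/2] × [4w,N])`,
then `d ≥ α √(N/w) log(1.5 M)`. -/
theorem L_shaped_degree_lower_bound : ∃ α : ℝ, 0 < α ∧
    ∀ (w N : ℕ) (M : ℝ) (p : MvPolynomial (Fin 2) ℝ) (d : ℕ),
      0 < w → 32 * w < N → 1 ≤ M → p.totalDegree = d →
      MvPolynomial.eval ![4 * (w : ℝ), 4 * (w : ℝ)] p ≥ 1.5 * M →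
      (∀ x y : ℝ,
        ((4 * (w : ℝ) ≤ x ∧ x ≤ (N : ℝ) ∧ 0 ≤ y ∧ y ≤ (w : ℝ) / 2) ∨
         (0 ≤ x ∧ x ≤ (w : ℝ) / 2 ∧ 4 * (w : ℝ) ≤ y ∧ y ≤ (N : ℝ))) →
        0 ≤ MvPolynomial.eval ![x, y] p ∧ MvPolynomial.eval ![x, y] p ≤ 1) →
      (d : ℝ) ≥ α * Real.sqrt ((N : ℝ) / (w : ℝ)) * Real.log (1.5 * M) := by
  refine ⟨1 / 60, by norm_num, ?_⟩
  rintro w N M p d hw hN hM rfl hcorner hL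
  have hw₀ : (0 : ℝ) < w := by exact_mod_cast hw
  have hN₀ : 32 * (w : ℝ) < N := by exact_mod_cast hN
  have hbound : ∀ x y, (x, y) ∈ LShape w N → |eval ![x, y] p| ≤ 1 := fun x y hxy ↦ by
    obtain ⟨h₀, h₁⟩ := hL x y (by simp only [LShape, mem_union, mem_prod, mem_Icc] at hxy; tauto)
    exact abs_le.2 ⟨by linarith, h₁⟩
  have hM₀ : 0 < 1.5 * M := by linarith
  have hlog : 0 ≤ log (1.5 * M) := log_nonneg (by linarith)
  rcases le_or_gt (N : ℝ) (100 * w) with hsmall | hlarge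
  · have hdiag := (log_le_iff_le_exp hM₀).2
      (hcorner.le.trans (eval_corner_le_of_LShape_diagonal p hw₀ (by linarith) hbound))
    have hsqrt : √(N / w) ≤ 10 := sqrt_le_iff.2 ⟨by norm_num, by rw [div_le_iff₀ hw₀]; linarith⟩
    nlinarith
  · have hhyp := (log_le_iff_le_exp hM₀).2
      (hcorner.le.trans (eval_corner_le_of_LShape_hyperbola p hw₀ hlarge.le hbound))
    rw [le_div_iff₀ (sqrt_pos.2 (div_pos (by linarith) hw₀))] at hhyp
    nlinarith
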